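/- Let l₁, l₂, l₃ > 0 and α₁, α₂, α₃ ∈ ℝ \ {0}. For a triple of positive integers (k₁,k₂,k₃), let φ_{k₁,k₂,k₃}(x₁,x₂,x₃) = (2^{3/2}/√(l₁l₂l₃)) sin(k₁πx₁/l₁) sin(k₂πx₂/l₂) sin(k₃πx₃/l₃). Then for every pair of triples of positive integers (k₁,k₂,k₃) and (h₁,h₂,h₃), ∫_{(0,l₁)×(0,l₂)×(0,l₃)} e^{α₁x₁+α₂x₂+α₃x₃} φ_{k₁,k₂,k₃}(x) φ_{h₁,h₂,h₃}(x) dx ≠ 0. -/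

import Mathlib

/-!
The weight `e^{α·x}` and both eigenfunctions factor over the coordinates, so the integral is a
nonzero constant times a product of three integrals `∫₀ˡ e^{αt} sin(kπt/l) sin(hπt/l) dt`.
Writing the product of sines as `(cos(c₁t) - cos(c₂t))/2` with `c₁ = (k-h)π/l`,
`c₂ = (k+h)π/l`, and using `cos(cᵢl) = (-1)^(k+h)`, `sin(cᵢl) = 0`, each of them equals
`(α/2) ((-1)^(k+h) e^{αl} - 1) (1/(α² + c₁²) - 1/(α² + c₂²))`.
The middle factor vanishes only if `αl = 0`, and the last one does not vanish since
`|k - h| < k + h` for positive `k, h`.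
-/

/-- The normalized Dirichlet eigenfunction of the Laplacian on the box
`(0,l₁)×(0,l₂)×(0,l₃)` with indices `(k₁,k₂,k₃)`. -/
noncomputable def boxEigenfun (l₁ l₂ l₃ : ℝ) (k₁ k₂ k₃ : ℕ) (x : ℝ × ℝ × ℝ) : ℝ :=
  (2 : ℝ) ^ ((3 : ℝ) / 2) / Real.sqrt (l₁ * l₂ * l₃) *
    Real.sin (k₁ * Real.pi * x.1 / l₁) *
    Real.sin (k₂ * Real.pi * x.2.1 / l₂) *
    Real.sin (k₃ * Real.pi * x.2.2 / l₃)

open MeasureTheory Real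

theorem integral_exp_mul_cos (α c l : ℝ) (hα : α ≠ 0) :
    ∫ x in (0 : ℝ)..l, exp (α * x) * cos (c * x) =
      (exp (α * l) * (α * cos (c * l) + c * sin (c * l)) - α) / (α ^ 2 + c ^ 2) := by
  have hden : α ^ 2 + c ^ 2 ≠ 0 := by positivity
  have hderiv (x : ℝ) : HasDerivAt
      (fun x ↦ exp (α * x) * (α * cos (c * x) + c * sin (c * x)) / (α ^ 2 + c ^ 2))
      (exp (α * x) * cos (c * x)) x := by
    have hexp : HasDerivAt (fun x ↦ exp (α * x)) (exp (α * x) * α) x := by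
      simpa using ((hasDerivAt_id x).const_mul α).exp
    have hcos : HasDerivAt (fun x ↦ cos (c * x)) (-sin (c * x) * c) x := by
      simpa using ((hasDerivAt_id x).const_mul c).cos
    have hsin : HasDerivAt (fun x ↦ sin (c * x)) (cos (c * x) * c) x := by
      simpa using ((hasDerivAt_id x).const_mul c).sin
    refine ((hexp.mul ((hcos.const_mul α).fun_add (hsin.const_mul c))).div_const _).congr_deriv ?_
    field_simp
    ring
  rw [intervalIntegral.integral_eq_sub_of_hasDerivAt (fun x _ ↦ hderiv x)
    ((by fun_prop : Continuous fun x ↦ exp (α * x) * cos (c * x)).intervalIntegrable _ _)]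
  simp only [mul_zero, cos_zero, sin_zero, exp_zero]
  ring

theorem integral_exp_mul_sin_mul_sin (α l : ℝ) (hα : α ≠ 0) (hl : l ≠ 0) (k h : ℕ) :
    ∫ x in (0 : ℝ)..l, exp (α * x) * (sin (k * π * x / l) * sin (h * π * x / l)) =
      α / 2 * ((-1) ^ (k + h) * exp (α * l) - 1) *
        (1 / (α ^ 2 + ((k - h) * π / l) ^ 2) - 1 / (α ^ 2 + ((k + h) * π / l) ^ 2)) := by
  set c₁ : ℝ := (k - h) * π / l
  set c₂ : ℝ := (k + h) * π / l
  have hprod (x : ℝ) : exp (α * x) * (sin (k * π * x / l) * sin (h * π * x / l)) =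
      (exp (α * x) * cos (c₁ * x) - exp (α * x) * cos (c₂ * x)) / 2 := by
    have hc₁ : c₁ * x = k * π * x / l - h * π * x / l := by ring
    have hc₂ : c₂ * x = k * π * x / l + h * π * x / l := by ring
    rw [hc₁, hc₂, cos_sub, cos_add]
    ring
  have hcos₁ : cos (c₁ * l) = (-1) ^ (k + h) := by
    have : c₁ * l + h * (2 * π) = (k + h : ℕ) * π := by
      simp only [c₁]; push_cast; field_simp; ring
    rw [← cos_add_nat_mul_two_pi, this, cos_nat_mul_pi]
  have hsin₁ : sin (c₁ * l) = 0 := by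
    have : c₁ * l = ((k - h : ℤ) : ℝ) * π := by simp only [c₁]; push_cast; field_simp
    rw [this, sin_int_mul_pi]
  have hc₂l : c₂ * l = (k + h : ℕ) * π := by simp only [c₂]; push_cast; field_simp
  simp_rw [hprod]
  rw [intervalIntegral.integral_div, intervalIntegral.integral_sub
      ((by fun_prop : Continuous _).intervalIntegrable _ _)
      ((by fun_prop : Continuous _).intervalIntegrable _ _),
    integral_exp_mul_cos α c₁ l hα, integral_exp_mul_cos α c₂ l hα,
    hcos₁, hsin₁, hc₂l, cos_nat_mul_pi, sin_nat_mul_pi]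
  have : α ^ 2 + c₁ ^ 2 ≠ 0 := by positivity
  have : α ^ 2 + c₂ ^ 2 ≠ 0 := by positivity
  field_simp
  ring

theorem integral_exp_mul_sin_mul_sin_ne_zero (α l : ℝ) (hα : α ≠ 0) (hl : l ≠ 0) {k h : ℕ}
    (hk : 0 < k) (hh : 0 < h) :
    ∫ x in (0 : ℝ)..l, exp (α * x) * (sin (k * π * x / l) * sin (h * π * x / l)) ≠ 0 := by
  rw [integral_exp_mul_sin_mul_sin α l hα hl]
  have hsign : (-1) ^ (k + h) * exp (α * l) ≠ 1 := by
    rcases neg_one_pow_eq_or ℝ (k + h) with hpm | hpm <;> rw [hpm]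
    · simpa [exp_eq_one_iff] using mul_ne_zero hα hl
    · linarith [exp_pos (α * l)]
  have hfreq : ((k - h) * π / l) ^ 2 < ((k + h) * π / l) ^ 2 := by
    have : ((k : ℝ) - h) ^ 2 < (k + h) ^ 2 := by
      nlinarith [(Nat.cast_pos.2 hk : (0 : ℝ) < k), (Nat.cast_pos.2 hh : (0 : ℝ) < h)]
    rw [div_pow, div_pow, mul_pow, mul_pow]
    gcongr
  refine mul_ne_zero (mul_ne_zero (div_ne_zero hα two_ne_zero) (sub_ne_zero.2 hsign)) ?_
  refine sub_ne_zero.2 (ne_of_gt ?_)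
  gcongr

theorem setIntegral_prod_prod_mul_mul {α β γ L : Type*} [MeasurableSpace α]
    [MeasurableSpace β] [MeasurableSpace γ] [RCLike L] {μ : Measure α} {ν : Measure β}
    {ρ : Measure γ} [SFinite μ] [SFinite ν] [SFinite ρ] (f : α → L) (g : β → L) (k : γ → L)
    (s : Set α) (t : Set β) (u : Set γ) :
    ∫ x in s ×ˢ (t ×ˢ u), f x.1 * (g x.2.1 * k x.2.2) ∂μ.prod (ν.prod ρ) =
      (∫ x in s, f x ∂μ) * ((∫ y in t, g y ∂ν) * ∫ z in u, k z ∂ρ) := by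
  rw [setIntegral_prod_mul f (fun y : β × γ ↦ g y.1 * k y.2), setIntegral_prod_mul]

/-- For nonzero `α₁, α₂, α₃`, the matrix elements of the multiplication operator
by `e^{α₁x₁+α₂x₂+α₃x₃}` between any two Dirichlet eigenfunctions of the box are
nonzero. -/
theorem integral_exp_mul_boxEigenfun_mul_boxEigenfun_ne_zero
    (l₁ l₂ l₃ : ℝ) (hl₁ : 0 < l₁) (hl₂ : 0 < l₂) (hl₃ : 0 < l₃)
    (α₁ α₂ α₃ : ℝ) (hα₁ : α₁ ≠ 0) (hα₂ : α₂ ≠ 0) (hα₃ : α₃ ≠ 0)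
    (k₁ k₂ k₃ h₁ h₂ h₃ : ℕ) (hk₁ : 0 < k₁) (hk₂ : 0 < k₂) (hk₃ : 0 < k₃)
    (hh₁ : 0 < h₁) (hh₂ : 0 < h₂) (hh₃ : 0 < h₃) :
    (∫ x in Set.Ioo (0 : ℝ) l₁ ×ˢ (Set.Ioo (0 : ℝ) l₂ ×ˢ Set.Ioo (0 : ℝ) l₃),
        Real.exp (α₁ * x.1 + α₂ * x.2.1 + α₃ * x.2.2) *
          (boxEigenfun l₁ l₂ l₃ k₁ k₂ k₃ x * boxEigenfun l₁ l₂ l₃ h₁ h₂ h₃ x)) ≠ 0 := by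
  set F := fun (α l : ℝ) (k h : ℕ) (t : ℝ) ↦
    exp (α * t) * (sin (k * π * t / l) * sin (h * π * t / l))
  set C : ℝ := ((2 : ℝ) ^ ((3 : ℝ) / 2) / √(l₁ * l₂ * l₃)) ^ 2
  have hsep (x : ℝ × ℝ × ℝ) : exp (α₁ * x.1 + α₂ * x.2.1 + α₃ * x.2.2) *
      (boxEigenfun l₁ l₂ l₃ k₁ k₂ k₃ x * boxEigenfun l₁ l₂ l₃ h₁ h₂ h₃ x) =
      C * (F α₁ l₁ k₁ h₁ x.1 * (F α₂ l₂ k₂ h₂ x.2.1 * F α₃ l₃ k₃ h₃ x.2.2)) := by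
    simp only [boxEigenfun, F, C, exp_add]
    ring
  have hIoo (f : ℝ → ℝ) {l : ℝ} (hl : 0 < l) : ∫ t in Set.Ioo 0 l, f t = ∫ t in 0..l, f t := by
    rw [intervalIntegral.integral_of_le hl.le, integral_Ioc_eq_integral_Ioo]
  simp_rw [hsep]
  rw [integral_const_mul, Measure.volume_eq_prod, Measure.volume_eq_prod,
    setIntegral_prod_prod_mul_mul, hIoo _ hl₁, hIoo _ hl₂, hIoo _ hl₃]
  have hC : C ≠ 0 := by positivity
  exact mul_ne_zero hC <| mul_ne_zero
    (integral_exp_mul_sin_mul_sin_ne_zero α₁ l₁ hα₁ hl₁.ne' hk₁ hh₁) <| mul_ne_zero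
    (integral_exp_mul_sin_mul_sin_ne_zero α₂ l₂ hα₂ hl₂.ne' hk₂ hh₂)
    (integral_exp_mul_sin_mul_sin_ne_zero α₃ l₃ hα₃ hl₃.ne' hk₃ hh₃)
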